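/- Assume f satisfies (H₁): there exists a constant L > 0 such that |f(t,x) − f(t,y)| ≤ L|x − y| for all t ∈ [0,1] and all x, y ∈ ℝ. Then for all x, y ∈ C([0,1],ℝ) one has ‖𝒜x − 𝒜y‖ ≤ L·Θ·‖x − y‖. -/

import Mathlib

open MeasureTheory intervalIntegral

noncomputable def Δ₁ (σ ν ξ : ℝ) (n : ℕ) (η α : ℕ → ℝ) : ℝ :=
  ξ ^ (1 - σ) * Real.Gamma (2 - ν) -
    Real.Gamma (2 - σ) * ∑ i ∈ Finset.Icc 1 n, α i * η i ^ (1 - ν)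

noncomputable def Δ₂ (n : ℕ) (η β γ : ℕ → ℝ) : ℝ :=
  1 - ∑ i ∈ Finset.Icc 1 n, (β i * η i + γ i)

noncomputable def Δ₃ (n : ℕ) (η β γ : ℕ → ℝ) : ℝ :=
  -2 + ∑ i ∈ Finset.Icc 1 n, η i * (β i * η i + 2 * γ i)

/-- The operator 𝒜 of the paper, acting on (the continuous extension of) a
continuous function on `[0,1]`. -/
noncomputable def opA (q σ ν ξ : ℝ) (n : ℕ) (η α β γ : ℕ → ℝ)
    (f : ℝ → ℝ → ℝ) (x : ℝ → ℝ) (t : ℝ) : ℝ :=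
  (∫ s in (0:ℝ)..t, (t - s) ^ (q - 1) / Real.Gamma q * f s (x s)) +
  (1 / Δ₂ n η β γ) *
    (-(∫ s in (0:ℝ)..1, (1 - s) ^ (q - 1) / Real.Gamma q * f s (x s)) +
     (∑ i ∈ Finset.Icc 1 n, β i *
        ∫ s in (0:ℝ)..η i, (η i - s) ^ q / Real.Gamma (q + 1) * f s (x s)) +
     ∑ i ∈ Finset.Icc 1 n, γ i *
        ∫ s in (0:ℝ)..η i, (η i - s) ^ (q - 1) / Real.Gamma q * f s (x s)) +
  Real.Gamma (2 - σ) * Real.Gamma (2 - ν) * (Δ₃ n η β γ + 2 * Δ₂ n η β γ * t) /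
      (2 * Δ₁ σ ν ξ n η α * Δ₂ n η β γ) *
    (-(∫ s in (0:ℝ)..ξ, (ξ - s) ^ (q - σ - 1) / Real.Gamma (q - σ) * f s (x s)) +
     ∑ i ∈ Finset.Icc 1 n, α i *
        ∫ s in (0:ℝ)..η i, (η i - s) ^ (q - ν - 1) / Real.Gamma (q - ν) * f s (x s))

noncomputable def Θ (q σ ν ξ : ℝ) (n : ℕ) (η α β γ : ℕ → ℝ) : ℝ :=
  1 / Real.Gamma (q + 1) +
  1 / (|Δ₂ n η β γ| * Real.Gamma (q + 2)) *
    (1 + q + ∑ i ∈ Finset.Icc 1 n, η i ^ q * (η i * |β i| + (q + 1) * |γ i|)) +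
  Real.Gamma (2 - σ) * Real.Gamma (2 - ν) * (|Δ₃ n η β γ| + 2 * |Δ₂ n η β γ|) /
      (2 * |Δ₁ σ ν ξ n η α * Δ₂ n η β γ|) *
    (ξ ^ (q - σ) / Real.Gamma (q - σ + 1) +
     ∑ i ∈ Finset.Icc 1 n, |α i| * η i ^ (q - ν) / Real.Gamma (q - ν + 1))

/-!
Lipschitz continuity gives `|f(s, x(s)) - f(s, y(s))| ≤ L‖x - y‖` on `[0, 1]`. The operator `𝒜` is
affine in the Riemann–Liouville integrals `I^p (f(·, x(·)))(a)` (orders `q`, `q + 1`, `q - σ`,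
`q - ν`, nodes `t`, `1`, `ξ`, `ηᵢ ∈ [0, 1]`), so `𝒜x - 𝒜y` is the same expression in the integrals
of the difference, each bounded by `L‖x - y‖ ∫₀ᵃ (a - s)^(p-1)/Γ(p) ds = L‖x - y‖ aᵖ/Γ(p + 1)`.
The triangle inequality, `Γ(q + 2) = (q + 1) Γ(q + 1)` and `|Δ₃ + 2Δ₂t| ≤ |Δ₃| + 2|Δ₂|` for
`t ∈ [0, 1]` then assemble these bounds into `L Θ ‖x - y‖`.
-/

noncomputable def riemannLiouville (p a : ℝ) (g : ℝ → ℝ) : ℝ :=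
  ∫ s in (0:ℝ)..a, (a - s) ^ (p - 1) / Real.Gamma p * g s

section RiemannLiouville

variable {p a : ℝ}

lemma intervalIntegrable_riemannLiouville_kernel (hp : 0 < p) :
    IntervalIntegrable (fun s => (a - s) ^ (p - 1) / Real.Gamma p) volume 0 a := by
  have h := (intervalIntegral.intervalIntegrable_rpow' (r := p - 1) (a := 0) (b := a)
    (by linarith)).comp_sub_left a
  simp only [sub_zero, sub_self] at h
  exact h.symm.div_const _

lemma integral_riemannLiouville_kernel (hp : 0 < p) :
    ∫ s in (0:ℝ)..a, (a - s) ^ (p - 1) / Real.Gamma p = a ^ p / Real.Gamma (p + 1) := by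
  rw [intervalIntegral.integral_div, integral_comp_sub_left (fun s => s ^ (p - 1)) a, sub_self,
    sub_zero, integral_rpow (Or.inl (by linarith)), sub_add_cancel, Real.zero_rpow hp.ne',
    sub_zero, Real.Gamma_add_one hp.ne']
  field_simp

lemma riemannLiouville_sub (hp : 0 < p) {u v : ℝ → ℝ} (hu : ContinuousOn u (Set.uIcc 0 a))
    (hv : ContinuousOn v (Set.uIcc 0 a)) :
    riemannLiouville p a u - riemannLiouville p a v = riemannLiouville p a (u - v) := by
  simp only [riemannLiouville, Pi.sub_apply, mul_sub]
  exact (integral_sub ((intervalIntegrable_riemannLiouville_kernel hp).mul_continuousOn hu)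
    ((intervalIntegrable_riemannLiouville_kernel hp).mul_continuousOn hv)).symm

lemma abs_riemannLiouville_le (hp : 0 < p) (ha : 0 ≤ a) {g : ℝ → ℝ} {C : ℝ}
    (hg : ∀ s ∈ Set.Ioc 0 a, |g s| ≤ C) :
    |riemannLiouville p a g| ≤ C * (a ^ p / Real.Gamma (p + 1)) := by
  calc |riemannLiouville p a g|
      ≤ ∫ s in (0:ℝ)..a, (a - s) ^ (p - 1) / Real.Gamma p * C := by
        rw [← Real.norm_eq_abs, riemannLiouville]
        refine norm_integral_le_of_norm_le ha (Filter.Eventually.of_forall fun s hs => ?_)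
          ((intervalIntegrable_riemannLiouville_kernel hp).mul_const C)
        have hk : 0 ≤ (a - s) ^ (p - 1) / Real.Gamma p :=
          div_nonneg (Real.rpow_nonneg (sub_nonneg.2 hs.2) _) (Real.Gamma_pos_of_pos hp).le
        rw [Real.norm_eq_abs, abs_mul, abs_of_nonneg hk]
        exact mul_le_mul_of_nonneg_left (hg s hs) hk
    _ = C * (a ^ p / Real.Gamma (p + 1)) := by
        rw [intervalIntegral.integral_mul_const, integral_riemannLiouville_kernel hp, mul_comm]

end RiemannLiouville

lemma abs_sum_mul_le {ι : Type*} (s : Finset ι) (c a e : ι → ℝ) (h : ∀ i ∈ s, |a i| ≤ e i) :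
    |∑ i ∈ s, c i * a i| ≤ ∑ i ∈ s, |c i| * e i :=
  (Finset.abs_sum_le_sum_abs _ _).trans <| Finset.sum_le_sum fun i hi => by
    rw [abs_mul]
    exact mul_le_mul_of_nonneg_left (h i hi) (abs_nonneg _)

lemma abs_mul_affine_div_le {c a b d e t : ℝ} (hc : 0 ≤ c) (ht : t ∈ Set.Icc (0:ℝ) 1) :
    |c * (a + 2 * b * t) / (2 * d * e)| ≤ c * (|a| + 2 * |b|) / (2 * |d * e|) := by
  rw [abs_div, abs_mul c, abs_of_nonneg hc, mul_assoc 2 d e, abs_mul 2, abs_two]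
  gcongr
  calc |a + 2 * b * t| ≤ |a| + |2 * b * t| := abs_add_le _ _
    _ = |a| + 2 * |b| * t := by rw [abs_mul, abs_mul, abs_two, abs_of_nonneg ht.1]
    _ ≤ |a| + 2 * |b| := by nlinarith [abs_nonneg b, ht.2]

lemma abs_IccExtend_sub_le_norm {a b : ℝ} (hab : a ≤ b) (x y : C(Set.Icc a b, ℝ)) (s : ℝ) :
    |Set.IccExtend hab x s - Set.IccExtend hab y s| ≤ ‖x - y‖ :=
  (x - y).norm_coe_le_norm (Set.projIcc a b hab s)

lemma nodes_mem_Icc {n : ℕ} {ξ : ℝ} {η : ℕ → ℝ} (hn : 1 ≤ n) (hξ : 0 < ξ) (hξη : ξ < η 1)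
    (hηmono : ∀ i, 1 ≤ i → i < n → η i < η (i + 1)) (hηn : η n < 1) :
    ξ ∈ Set.Icc 0 1 ∧ ∀ i ∈ Finset.Icc 1 n, η i ∈ Set.Icc 0 1 := by
  have hmono : MonotoneOn η (Set.Icc 1 n) :=
    monotoneOn_of_le_add_one Set.ordConnected_Icc fun i _ hi hi1 =>
      (hηmono i hi.1 (by linarith [hi1.2])).le
  have hbounds : ∀ i ∈ Finset.Icc 1 n, ξ < η i ∧ η i < 1 := fun i hi => by
    rw [Finset.mem_Icc] at hi
    exact ⟨hξη.trans_le (hmono ⟨le_rfl, hn⟩ hi hi.1), (hmono hi ⟨hn, le_rfl⟩ hi.2).trans_lt hηn⟩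
  refine ⟨⟨hξ.le, ?_⟩, fun i hi => ⟨(hξ.trans (hbounds i hi).1).le, (hbounds i hi).2.le⟩⟩
  linarith [hbounds 1 (Finset.mem_Icc.2 ⟨le_rfl, hn⟩)]

section OperatorA

variable (q σ ν ξ : ℝ) (n : ℕ) (η α β γ : ℕ → ℝ)

/-- `𝒜` with `J p a` standing for the Riemann–Liouville integral `I^p (f(·, x(·)))` at `a`. -/
noncomputable def opAOfIntegrals (J : ℝ → ℝ → ℝ) (t : ℝ) : ℝ :=
  J q t +
  (1 / Δ₂ n η β γ) *
    (-J q 1 + (∑ i ∈ Finset.Icc 1 n, β i * J (q + 1) (η i)) +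
      ∑ i ∈ Finset.Icc 1 n, γ i * J q (η i)) +
  Real.Gamma (2 - σ) * Real.Gamma (2 - ν) * (Δ₃ n η β γ + 2 * Δ₂ n η β γ * t) /
      (2 * Δ₁ σ ν ξ n η α * Δ₂ n η β γ) *
    (-J (q - σ) ξ + ∑ i ∈ Finset.Icc 1 n, α i * J (q - ν) (η i))

lemma opA_eq_opAOfIntegrals (f : ℝ → ℝ → ℝ) (x : ℝ → ℝ) (t : ℝ) :
    opA q σ ν ξ n η α β γ f x t =
      opAOfIntegrals q σ ν ξ n η α β γ (fun p a => riemannLiouville p a fun s => f s (x s)) t := by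
  simp only [opA, opAOfIntegrals, riemannLiouville, add_sub_cancel_right]

lemma opAOfIntegrals_sub (J₁ J₂ : ℝ → ℝ → ℝ) (t : ℝ) :
    opAOfIntegrals q σ ν ξ n η α β γ (J₁ - J₂) t =
      opAOfIntegrals q σ ν ξ n η α β γ J₁ t - opAOfIntegrals q σ ν ξ n η α β γ J₂ t := by
  simp only [opAOfIntegrals, Pi.sub_apply, mul_sub, Finset.sum_sub_distrib]
  ring

variable {q σ ν ξ n η α β γ} {J : ℝ → ℝ → ℝ} {C : ℝ}

lemma abs_boundary_terms_le (hq : 0 < q) (hη : ∀ i ∈ Finset.Icc 1 n, η i ∈ Set.Icc (0:ℝ) 1)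
    (hJ : ∀ p, 0 < p → ∀ a ∈ Set.Icc (0:ℝ) 1, |J p a| ≤ C * (a ^ p / Real.Gamma (p + 1))) :
    |-J q 1 + (∑ i ∈ Finset.Icc 1 n, β i * J (q + 1) (η i)) +
        ∑ i ∈ Finset.Icc 1 n, γ i * J q (η i)| ≤
      C / Real.Gamma (q + 2) *
        (1 + q + ∑ i ∈ Finset.Icc 1 n, η i ^ q * (η i * |β i| + (q + 1) * |γ i|)) := by
  have hΓ : Real.Gamma (q + 1 + 1) = (q + 1) * Real.Gamma (q + 1) :=
    Real.Gamma_add_one (by linarith)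
  have hΓpos := Real.Gamma_pos_of_pos (show 0 < q + 1 by linarith)
  have hterm : ∀ i ∈ Finset.Icc 1 n,
      |β i| * (C * (η i ^ (q + 1) / Real.Gamma (q + 1 + 1))) +
        |γ i| * (C * (η i ^ q / Real.Gamma (q + 1))) =
      C / Real.Gamma (q + 1 + 1) * (η i ^ q * (η i * |β i| + (q + 1) * |γ i|)) := by
    intro i hi
    rw [Real.rpow_add_one' (hη i hi).1 (by linarith), hΓ]
    field_simp
  rw [show q + 2 = q + 1 + 1 by ring]
  calc _ ≤ |J q 1| + ∑ i ∈ Finset.Icc 1 n, |β i| * (C * (η i ^ (q + 1) / Real.Gamma (q + 1 + 1))) +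
        ∑ i ∈ Finset.Icc 1 n, |γ i| * (C * (η i ^ q / Real.Gamma (q + 1))) :=
        (abs_add_le _ _).trans <| add_le_add ((abs_add_le _ _).trans <| add_le_add (abs_neg _).le
          (abs_sum_mul_le _ _ _ _ fun i hi => hJ _ (by linarith) _ (hη i hi)))
          (abs_sum_mul_le _ _ _ _ fun i hi => hJ _ hq _ (hη i hi))
    _ ≤ C * (1 ^ q / Real.Gamma (q + 1)) +
        ∑ i ∈ Finset.Icc 1 n, |β i| * (C * (η i ^ (q + 1) / Real.Gamma (q + 1 + 1))) +
        ∑ i ∈ Finset.Icc 1 n, |γ i| * (C * (η i ^ q / Real.Gamma (q + 1))) := by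
        gcongr
        exact hJ q hq 1 (by simp)
    _ = _ := by
        rw [add_assoc, ← Finset.sum_add_distrib, Finset.sum_congr rfl hterm, ← Finset.mul_sum,
          Real.one_rpow, hΓ]
        field_simp
        ring

lemma abs_fractional_terms_le (hσ : σ < q) (hν : ν < q) (hξ : ξ ∈ Set.Icc (0:ℝ) 1)
    (hη : ∀ i ∈ Finset.Icc 1 n, η i ∈ Set.Icc (0:ℝ) 1)
    (hJ : ∀ p, 0 < p → ∀ a ∈ Set.Icc (0:ℝ) 1, |J p a| ≤ C * (a ^ p / Real.Gamma (p + 1))) :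
    |-J (q - σ) ξ + ∑ i ∈ Finset.Icc 1 n, α i * J (q - ν) (η i)| ≤
      C * (ξ ^ (q - σ) / Real.Gamma (q - σ + 1) +
        ∑ i ∈ Finset.Icc 1 n, |α i| * η i ^ (q - ν) / Real.Gamma (q - ν + 1)) := by
  calc _ ≤ |J (q - σ) ξ| +
        ∑ i ∈ Finset.Icc 1 n, |α i| * (C * (η i ^ (q - ν) / Real.Gamma (q - ν + 1))) :=
        (abs_add_le _ _).trans <| add_le_add (abs_neg _).le
          (abs_sum_mul_le _ _ _ _ fun i hi => hJ _ (by linarith) _ (hη i hi))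
    _ ≤ C * (ξ ^ (q - σ) / Real.Gamma (q - σ + 1)) +
        ∑ i ∈ Finset.Icc 1 n, |α i| * (C * (η i ^ (q - ν) / Real.Gamma (q - ν + 1))) := by
        gcongr
        exact hJ _ (by linarith) _ hξ
    _ = _ := by
        rw [mul_add, Finset.mul_sum]
        congr 1
        exact Finset.sum_congr rfl fun i _ => by ring

lemma abs_opAOfIntegrals_le (hq : 1 < q) (hσ : σ ≤ 1) (hν : ν ≤ 1) (hξ : ξ ∈ Set.Icc (0:ℝ) 1)
    (hη : ∀ i ∈ Finset.Icc 1 n, η i ∈ Set.Icc (0:ℝ) 1) (hC : 0 ≤ C)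
    (hJ : ∀ p, 0 < p → ∀ a ∈ Set.Icc (0:ℝ) 1, |J p a| ≤ C * (a ^ p / Real.Gamma (p + 1)))
    {t : ℝ} (ht : t ∈ Set.Icc (0:ℝ) 1) :
    |opAOfIntegrals q σ ν ξ n η α β γ J t| ≤ C * Θ q σ ν ξ n η α β γ := by
  have hΓσ := Real.Gamma_pos_of_pos (show 0 < 2 - σ by linarith)
  have hΓν := Real.Gamma_pos_of_pos (show 0 < 2 - ν by linarith)
  have hfirst : |J q t| ≤ C * (1 / Real.Gamma (q + 1)) := by
    refine (hJ q (by linarith) t ht).trans ?_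
    gcongr
    exact Real.rpow_le_one ht.1 ht.2 (by linarith)
  refine (abs_add_three _ _ _).trans ?_
  rw [abs_mul, abs_mul]
  refine le_of_le_of_eq (add_le_add_three hfirst
    (mul_le_mul_of_nonneg_left (abs_boundary_terms_le (by linarith) hη hJ) (abs_nonneg _))
    (mul_le_mul (abs_mul_affine_div_le (by positivity) ht)
      (abs_fractional_terms_le (by linarith) (by linarith) hξ hη hJ) (abs_nonneg _)
      (by positivity))) ?_
  simp only [Θ, abs_div, abs_one]
  ring

end OperatorA

theorem thm31_contraction_estimate_general (q σ ν ξ : ℝ) (n : ℕ) (η α β γ : ℕ → ℝ)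
    (hq1 : 1 < q) (hσ1 : σ ≤ 1) (hν1 : ν ≤ 1)
    (hn : 1 ≤ n) (hξ : 0 < ξ) (hξη : ξ < η 1)
    (hηmono : ∀ i, 1 ≤ i → i < n → η i < η (i + 1)) (hηn : η n < 1)
    (f : ℝ → ℝ → ℝ)
    (hf : ContinuousOn (Function.uncurry f) (Set.Icc 0 1 ×ˢ Set.univ))
    (L : ℝ) (hL : 0 < L)
    (hLip : ∀ t ∈ Set.Icc (0:ℝ) 1, ∀ x y : ℝ, |f t x - f t y| ≤ L * |x - y|) :
    ∀ x y : C(Set.Icc (0:ℝ) 1, ℝ), ∀ t ∈ Set.Icc (0:ℝ) 1,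
      |opA q σ ν ξ n η α β γ f (Set.IccExtend zero_le_one ⇑x) t -
        opA q σ ν ξ n η α β γ f (Set.IccExtend zero_le_one ⇑y) t| ≤
      L * Θ q σ ν ξ n η α β γ * ‖x - y‖ := by
  intro x y t ht
  obtain ⟨hξ01, hη01⟩ := nodes_mem_Icc hn hξ hξη hηmono hηn
  set F := fun z : C(Set.Icc (0:ℝ) 1, ℝ) => fun s => f s (Set.IccExtend zero_le_one z s)
  have hF : ∀ z, ContinuousOn (F z) (Set.Icc 0 1) := fun z =>
    hf.comp (continuous_id.prodMk z.continuous.Icc_extend').continuousOn fun s hs => ⟨hs, trivial⟩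
  have hFxy : ∀ s ∈ Set.Icc (0:ℝ) 1, |F x s - F y s| ≤ L * ‖x - y‖ := fun s hs =>
    (hLip s hs _ _).trans (mul_le_mul_of_nonneg_left (abs_IccExtend_sub_le_norm _ x y s) hL.le)
  have hJ : ∀ p, 0 < p → ∀ a ∈ Set.Icc (0:ℝ) 1,
      |riemannLiouville p a (F x) - riemannLiouville p a (F y)| ≤
        L * ‖x - y‖ * (a ^ p / Real.Gamma (p + 1)) := by
    intro p hp a ha
    have hsub := Set.uIcc_subset_Icc (Set.left_mem_Icc.2 zero_le_one) ha
    rw [riemannLiouville_sub hp ((hF x).mono hsub) ((hF y).mono hsub)]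
    exact abs_riemannLiouville_le hp ha.1 fun s hs => hFxy s ⟨hs.1.le, hs.2.trans ha.2⟩
  rw [opA_eq_opAOfIntegrals, opA_eq_opAOfIntegrals, ← opAOfIntegrals_sub, mul_right_comm]
  exact abs_opAOfIntegrals_le hq1 hσ1 hν1 hξ01 hη01 (by positivity) hJ ht

theorem thm31_contraction_estimate (q σ ν ξ : ℝ) (n : ℕ) (η α β γ : ℕ → ℝ)
    (hq1 : 1 < q) (hq2 : q ≤ 2) (hσ0 : 0 < σ) (hσ1 : σ ≤ 1) (hν0 : 0 < ν) (hν1 : ν ≤ 1)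
    (hn : 1 ≤ n) (hξ : 0 < ξ) (hξη : ξ < η 1)
    (hηmono : ∀ i, 1 ≤ i → i < n → η i < η (i + 1)) (hηn : η n < 1)
    (hΔ₁ : Δ₁ σ ν ξ n η α ≠ 0) (hΔ₂ : Δ₂ n η β γ ≠ 0)
    (f : ℝ → ℝ → ℝ)
    (hf : ContinuousOn (Function.uncurry f) (Set.Icc 0 1 ×ˢ Set.univ))
    (L : ℝ) (hL : 0 < L)
    (hLip : ∀ t ∈ Set.Icc (0:ℝ) 1, ∀ x y : ℝ, |f t x - f t y| ≤ L * |x - y|) :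
    ∀ x y : C(Set.Icc (0:ℝ) 1, ℝ), ∀ t ∈ Set.Icc (0:ℝ) 1,
      |opA q σ ν ξ n η α β γ f (Set.IccExtend zero_le_one ⇑x) t -
        opA q σ ν ξ n η α β γ f (Set.IccExtend zero_le_one ⇑y) t| ≤
      L * Θ q σ ν ξ n η α β γ * ‖x - y‖ :=
  thm31_contraction_estimate_general q σ ν ξ n η α β γ hq1 hσ1 hν1 hn hξ hξη hηmono hηn f hf L hL
    hLip
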